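/- Let G' be the directed graph obtained from the symmetric odd cycle on 2k+1 vertices by removing the single arrow (2,1). Then every arrow of G' lies in a directed cycle, and P_{G'} is unimodularly equivalent to the pseudo del Pezzo polytope conv{±e_1,...,±e_{2k}, e_1+...+e_{2k}} ⊂ ℝ^{2k}. -/

import Mathlib

open Finset

/-- `ρ(e) = e_{i} - e_{j}` for an arrow `e = (i,j)`. -/
def rho {V : Type*} [DecidableEq V] (e : V × V) : V → ℝ :=
  fun k => (if k = e.1 then (1 : ℝ) else 0) - (if k = e.2 then (1 : ℝ) else 0)

/-- The polytope `P_G` associated with the arrow set `A` of a directed graph. -/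
def polyG {V : Type*} [DecidableEq V] (A : Finset (V × V)) : Set (V → ℝ) :=
  convexHull ℝ (rho '' (A : Set (V × V)))

/-- Connectivity of the underlying undirected graph of the directed graph with arrow set `A`. -/
def GConnected {V : Type*} [DecidableEq V] (A : Finset (V × V)) : Prop :=
  (SimpleGraph.fromRel (fun i j => (i, j) ∈ A)).Connected

/-- Cyclic successor on `Fin l`. -/
def succAt {l : ℕ} (h : 0 < l) (j : Fin l) : Fin l :=
  ⟨((j : ℕ) + 1) % l, Nat.mod_lt _ h⟩

/-- The data of a cycle in a directed graph on the vertex set `V`: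
a list of at least two distinct vertices, cyclically ordered, together with, for each
edge of the cycle, a choice of direction (`ε j = true` means the arrow points forwards). -/
structure PreCycle (V : Type*) where
  l : ℕ
  two_le : 2 ≤ l
  v : Fin l → V
  ε : Fin l → Bool
  inj : Function.Injective v

namespace PreCycle

variable {V : Type*}

theorem pos (C : PreCycle V) : 0 < C.l :=
  lt_of_lt_of_le Nat.zero_lt_two C.two_le

/-- The cyclically next index. -/
def nxt (C : PreCycle V) (j : Fin C.l) : Fin C.l := succAt C.pos j

/-- The arrow of the cycle corresponding to its `j`-th edge. -/
def arrow (C : PreCycle V) (j : Fin C.l) : V × V :=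
  if C.ε j then (C.v j, C.v (C.nxt j)) else (C.v (C.nxt j), C.v j)

/-- `C` is a cycle in the directed graph with arrow set `A`. -/
def IsCycleIn [DecidableEq V] (C : PreCycle V) (A : Finset (V × V)) : Prop :=
  (∀ j, C.arrow j ∈ A) ∧ Function.Injective C.arrow

/-- A cycle is homogeneous if it has as many forward arrows as backward arrows. -/
def Homogeneous (C : PreCycle V) : Prop :=
  2 * (Finset.univ.filter fun j => C.ε j = true).card = C.l

/-- A directed cycle: all arrows point in the direction of traversal. -/
def IsDirected (C : PreCycle V) : Prop := ∀ j, C.ε j = true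

/-- The defining property of the function `μ_C` attached to a homogeneous cycle `C`
(here recorded as a function of the position along the cycle; since the vertices of the
cycle are distinct this is the same as a function on the cycle vertices):
it is nonnegative, decreases by `1` along forward arrows, increases by `1` along
backward arrows, and has minimum value `0`. -/
def IsMu (C : PreCycle V) (μ : Fin C.l → ℤ) : Prop :=
  (∀ j, 0 ≤ μ j) ∧ (∀ j, μ (C.nxt j) = if C.ε j then μ j - 1 else μ j + 1) ∧ (∃ j, μ j = 0)

end PreCycle

/-- Every arrow of the directed graph with arrow set `A` lies in a directed cycle. -/
def EveryArrowInDirCycle {V : Type*} [DecidableEq V] (A : Finset (V × V)) : Prop :=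
  ∀ e ∈ A, ∃ C : PreCycle V, C.IsCycleIn A ∧ C.IsDirected ∧ ∃ j, C.arrow j = e

/-- The dimension of a subset of `ℝ^V` (the dimension of its affine hull). -/
noncomputable def pdim {V : Type*} (s : Set (V → ℝ)) : ℕ :=
  Module.finrank ℝ (vectorSpan ℝ s)

/-- `F` is a facet of the polytope `P`: a nonempty exposed face of codimension one. -/
def IsFacetOf {V : Type*} (F P : Set (V → ℝ)) : Prop :=
  IsExposed ℝ P F ∧ F.Nonempty ∧ pdim F + 1 = pdim P

/-- A polytope is simplicial if the vertices of every facet are affinely independent. -/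
def Simplicial {V : Type*} (P : Set (V → ℝ)) : Prop :=
  ∀ F : Set (V → ℝ), IsFacetOf F P →
    AffineIndependent ℝ (fun x : (F.extremePoints ℝ) => (x : V → ℝ))

/-- The lattice `ℤ^V ∩ {x : Σ x_i = 0}`, as a subset of `ℝ^V`. -/
def latticeSet (V : Type*) [Fintype V] : Set (V → ℝ) :=
  {x | (∀ i, ∃ z : ℤ, x i = (z : ℝ)) ∧ ∑ i, x i = 0}

/-- The set of integer points of `ℝ^V`. -/
def intLat (V : Type*) : Set (V → ℝ) :=
  {x | ∀ i, ∃ z : ℤ, x i = (z : ℝ)}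

/-- `W` is a `ℤ`-basis of (the additive group generated by) `L`. -/
def IsZBasisOf {V : Type*} (W L : Set (V → ℝ)) : Prop :=
  W ⊆ L ∧ LinearIndependent ℤ (fun x : W => (x : V → ℝ)) ∧
    L ⊆ (Submodule.span ℤ W : Set (V → ℝ))

/-- There is a directed path of length `n` from `i` to `j` in the directed graph `A`. -/
def HasDPath {V : Type*} (A : Finset (V × V)) (i j : V) (n : ℕ) : Prop :=
  ∃ f : Fin (n + 1) → V, f 0 = i ∧ f (Fin.last n) = j ∧
    ∀ k : Fin n, (f k.castSucc, f k.succ) ∈ A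

/-- The underlying undirected graph of `A` contains an even cycle. -/
def HasEvenCycle {V : Type*} [DecidableEq V] (A : Finset (V × V)) : Prop :=
  ∃ C : PreCycle V, 3 ≤ C.l ∧ Even C.l ∧
    ∀ j, (C.v j, C.v (C.nxt j)) ∈ A ∨ (C.v (C.nxt j), C.v j) ∈ A

/-- The symmetric directed cycle on `m` vertices: arrows `(i, i+1)` and `(i+1, i)`
for all `i`, cyclically. -/
def symCyc (m : ℕ) [NeZero m] : Finset (Fin m × Fin m) :=
  (Finset.univ.image fun i : Fin m => (i, i + 1)) ∪
    (Finset.univ.image fun i : Fin m => (i + 1, i))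

/-- The vertex set of the del Pezzo polytope `conv{±e_1, …, ±e_n, ±(e_1 + ⋯ + e_n)}`. -/
def delPezzoVerts (n : ℕ) : Set (Fin n → ℝ) :=
  {x | (∃ i, x = Pi.single i (1 : ℝ)) ∨ (∃ i, x = Pi.single i (-1 : ℝ)) ∨
    x = (fun _ => 1) ∨ x = (fun _ => -1)}

/-- The vertex set of the pseudo del Pezzo polytope
`conv{±e_1, …, ±e_n, e_1 + ⋯ + e_n}`. -/
def pseudoDelPezzoVerts (n : ℕ) : Set (Fin n → ℝ) :=
  {x | (∃ i, x = Pi.single i (1 : ℝ)) ∨ (∃ i, x = Pi.single i (-1 : ℝ)) ∨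
    x = (fun _ => 1)}

/-! Every forward arrow `(c, c + 1)` survives the deletion, so all of them lie on the directed
Hamiltonian cycle, and each remaining backward arrow `(c + 1, c)` forms a directed 2-cycle with
`(c, c + 1)`.

The linear map `x ↦ (-(x₁ + ⋯ + x_j))_{j=1..n}` sends the arrow `(0, 1)` to `e₁ + ⋯ + eₙ` and the
arrows `(c, c + 1)`, `(c + 1, c)` with `c ≠ 0` to `-e_c`, `e_c`. Since it sends the lattice vectors
`ρ(c + 1, c)` to the standard basis, it has an integral section with image in the hyperplane
`∑ xᵢ = 0`; both sides have dimension `n`, so the section is onto the hyperplane and the map is a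
lattice isomorphism. -/

def LiesOnDirCycle {V : Type*} [DecidableEq V] (A : Finset (V × V)) (e : V × V) : Prop :=
  ∃ C : PreCycle V, C.IsCycleIn A ∧ C.IsDirected ∧ ∃ j, C.arrow j = e

namespace PreCycle

variable {V : Type*}

def ofPair {a b : V} (h : a ≠ b) : PreCycle V where
  l := 2
  two_le := le_rfl
  v := ![a, b]
  ε := fun _ => true
  inj := by
    intro i j
    fin_cases i <;> fin_cases j <;> simp [h, h.symm]

theorem ofPair_arrow {a b : V} (h : a ≠ b) : (ofPair h).arrow = ![(a, b), (b, a)] := by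
  funext j
  fin_cases j <;> simp [ofPair, arrow, nxt, succAt]

def rotation (n : ℕ) (hn : 1 ≤ n) : PreCycle (Fin (n + 1)) where
  l := n + 1
  two_le := by omega
  v := id
  ε := fun _ => true
  inj := Function.injective_id

theorem rotation_arrow {n : ℕ} (hn : 1 ≤ n) (c : Fin (n + 1)) :
    (rotation n hn).arrow c = (c, c + 1) := by
  simp [rotation, arrow, nxt, succAt, Fin.ext_iff, Fin.val_add]

end PreCycle

theorem liesOnDirCycle_of_mem_of_swap_mem {V : Type*} [DecidableEq V] {A : Finset (V × V)}
    {a b : V} (hab : (a, b) ∈ A) (hba : (b, a) ∈ A) (h : a ≠ b) : LiesOnDirCycle A (a, b) := by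
  refine ⟨PreCycle.ofPair h, ⟨?_, ?_⟩, fun _ => rfl, (0 : Fin 2), by simp [PreCycle.ofPair_arrow]⟩
  all_goals rw [PreCycle.ofPair_arrow]
  · intro j
    fin_cases j <;> assumption
  · intro i j hij
    fin_cases i <;> fin_cases j
    exacts [rfl, (h (congrArg Prod.fst hij)).elim, (h (congrArg Prod.snd hij)).elim, rfl]

theorem liesOnDirCycle_rotation {n : ℕ} (hn : 1 ≤ n) {A : Finset (Fin (n + 1) × Fin (n + 1))}
    (hA : ∀ c : Fin (n + 1), (c, c + 1) ∈ A) (c : Fin (n + 1)) : LiesOnDirCycle A (c, c + 1) := by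
  have harrow := PreCycle.rotation_arrow hn
  refine ⟨PreCycle.rotation n hn, ⟨fun j => ?_, fun i j h => ?_⟩, fun _ => rfl, c, harrow c⟩
  · rw [harrow j]
    exact hA j
  · rw [harrow i, harrow j] at h
    exact congrArg Prod.fst h

theorem mem_erase_symCyc_iff {n : ℕ} (hn : 2 ≤ n) {a b : Fin (n + 1)} :
    (a, b) ∈ (symCyc (n + 1)).erase (1, 0) ↔ b = a + 1 ∨ (a = b + 1 ∧ b ≠ 0) := by
  have h2 : (1 + 1 : Fin (n + 1)) ≠ 0 := by
    simp [Fin.ext_iff, Fin.val_add, Nat.mod_eq_of_lt (show 2 < n + 1 by omega)]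
  simp [symCyc, eq_comm]
  aesop

theorem everyArrowInDirCycle_erase_symCyc {n : ℕ} (hn : 2 ≤ n) :
    EveryArrowInDirCycle ((symCyc (n + 1)).erase (1, 0)) := by
  have hfwd : ∀ c : Fin (n + 1), (c, c + 1) ∈ (symCyc (n + 1)).erase (1, 0) :=
    fun c => (mem_erase_symCyc_iff hn).2 (Or.inl rfl)
  rintro ⟨a, b⟩ hab
  rcases (mem_erase_symCyc_iff hn).1 hab with rfl | ⟨rfl, -⟩
  · exact liesOnDirCycle_rotation (by omega) hfwd a
  · refine liesOnDirCycle_of_mem_of_swap_mem hab (hfwd b) ?_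
    simp [Fin.ext_iff]
    omega

theorem rho_eq_single_sub_single {V : Type*} [DecidableEq V] (e : V × V) :
    rho e = Pi.single e.1 1 - Pi.single e.2 1 := by
  funext k
  simp [rho, Pi.single_apply]

theorem LinearMap.leftInvOn_of_rightInverse_of_finrank_eq {K E F : Type*} [Field K]
    [AddCommGroup E] [Module K E] [AddCommGroup F] [Module K F] [FiniteDimensional K E]
    [FiniteDimensional K F] {T : E →ₗ[K] F} {S : F →ₗ[K] E} {H : Submodule K E}
    (hS : ∀ y, S y ∈ H) (hTS : Function.RightInverse S T)
    (hH : Module.finrank K H = Module.finrank K F) : Set.LeftInvOn S T H := by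
  intro x hx
  have hinj : Function.Injective (S.codRestrict H hS) :=
    fun y y' h => hTS.injective (congrArg Subtype.val h)
  obtain ⟨y, hy⟩ := (LinearMap.injective_iff_surjective_of_finrank_eq_finrank hH.symm).1 hinj
    ⟨x, hx⟩
  have hSy : S y = x := congrArg Subtype.val hy
  rw [← hSy, hTS y]

def sumZero (ι : Type*) [Fintype ι] : Submodule ℝ (ι → ℝ) :=
  LinearMap.ker (∑ i, LinearMap.proj i)

theorem mem_sumZero {ι : Type*} [Fintype ι] {x : ι → ℝ} : x ∈ sumZero ι ↔ ∑ i, x i = 0 := by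
  simp [sumZero]

theorem finrank_sumZero_add_one (ι : Type*) [Fintype ι] [Nonempty ι] :
    Module.finrank ℝ (sumZero ι) + 1 = Fintype.card ι := by
  classical
  have hsurj : Function.Surjective (∑ i, LinearMap.proj i : (ι → ℝ) →ₗ[ℝ] ℝ) := fun t =>
    ⟨Pi.single (Classical.arbitrary ι) t, by simp⟩
  have h := LinearMap.finrank_range_add_finrank_ker (∑ i, LinearMap.proj i : (ι → ℝ) →ₗ[ℝ] ℝ)
  rw [LinearMap.range_eq_top.2 hsurj, finrank_top, Module.finrank_self,
    Module.finrank_fintype_fun_eq_card] at h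
  rw [sumZero]
  omega

theorem rho_mem_sumZero {V : Type*} [Fintype V] [DecidableEq V] (e : V × V) :
    rho e ∈ sumZero V := by
  simp [mem_sumZero, rho_eq_single_sub_single, Finset.sum_sub_distrib]

theorem rho_mem_intLat {V : Type*} [DecidableEq V] (e : V × V) : rho e ∈ intLat V := by
  intro k
  simp only [rho]
  split_ifs
  exacts [⟨0, by simp⟩, ⟨1, by simp⟩, ⟨-1, by simp⟩, ⟨0, by simp⟩]

theorem sum_smul_mem_intLat {ι V : Type*} [Fintype ι] {f : ι → ℝ} {g : ι → V → ℝ}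
    (hf : ∀ i, ∃ z : ℤ, f i = z) (hg : ∀ i, g i ∈ intLat V) : ∑ i, f i • g i ∈ intLat V := by
  intro v
  choose z hz using hf
  choose w hw using hg
  exact ⟨∑ i, z i * w i v, by simp [Finset.sum_apply, hz, hw]⟩

def negPrefixSumCol (n : ℕ) (c : Fin (n + 1)) : Fin n → ℝ :=
  fun j => if 0 < (c : ℕ) ∧ (c : ℕ) ≤ j + 1 then -1 else 0

-- `negPrefixSum n x j = -(x 1 + ⋯ + x (j + 1))`
def negPrefixSum (n : ℕ) : (Fin (n + 1) → ℝ) →ₗ[ℝ] (Fin n → ℝ) :=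
  Fintype.linearCombination ℝ (negPrefixSumCol n)

theorem negPrefixSum_rho {n : ℕ} (a b : Fin (n + 1)) :
    negPrefixSum n (rho (a, b)) = negPrefixSumCol n a - negPrefixSumCol n b := by
  simp [negPrefixSum, rho_eq_single_sub_single, Fintype.linearCombination_apply_single]

theorem negPrefixSum_rho_add_one {n : ℕ} (c : Fin (n + 1)) (hc : c ≠ 0) :
    negPrefixSum n (rho (c, c + 1)) = -Pi.single (c.pred hc) 1 := by
  have hc' : 0 < (c : ℕ) := Fin.pos_iff_ne_zero.2 hc
  funext j
  simp only [negPrefixSum_rho, negPrefixSumCol, Pi.sub_apply, Pi.neg_apply, Pi.single_apply,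
    Fin.ext_iff, Fin.val_pred, Fin.val_add_one]
  split_ifs <;> simp_all <;> omega

theorem negPrefixSum_rho_add_one_swap {n : ℕ} (c : Fin (n + 1)) (hc : c ≠ 0) :
    negPrefixSum n (rho (c + 1, c)) = Pi.single (c.pred hc) 1 := by
  rw [← neg_neg (Pi.single _ _), ← negPrefixSum_rho_add_one c hc, negPrefixSum_rho,
    negPrefixSum_rho, neg_sub]

theorem negPrefixSum_rho_zero_one {n : ℕ} (hn : 1 ≤ n) :
    negPrefixSum n (rho (0, 1)) = fun _ => 1 := by
  funext j
  simp [negPrefixSum_rho, negPrefixSumCol, Nat.mod_eq_of_lt (show 1 < n + 1 by omega)]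

theorem image_negPrefixSum_rho_erase_symCyc {n : ℕ} (hn : 2 ≤ n) :
    negPrefixSum n '' (rho '' ((symCyc (n + 1)).erase (1, 0) : Set (Fin (n + 1) × Fin (n + 1)))) =
      pseudoDelPezzoVerts n := by
  ext y
  simp only [Set.image_image, Set.mem_image, Finset.mem_coe, Prod.exists, mem_erase_symCyc_iff hn]
  constructor
  · rintro ⟨a, b, rfl | ⟨rfl, hb⟩, rfl⟩
    · by_cases ha : a = 0
      · subst ha
        rw [zero_add, negPrefixSum_rho_zero_one (by omega)]
        exact Or.inr (Or.inr rfl)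
      · rw [negPrefixSum_rho_add_one a ha, ← Pi.single_neg]
        exact Or.inr (Or.inl ⟨_, rfl⟩)
    · rw [negPrefixSum_rho_add_one_swap b hb]
      exact Or.inl ⟨_, rfl⟩
  · rintro (⟨i, rfl⟩ | ⟨i, rfl⟩ | rfl)
    · refine ⟨i.succ + 1, i.succ, Or.inr ⟨rfl, i.succ_ne_zero⟩, ?_⟩
      rw [negPrefixSum_rho_add_one_swap _ i.succ_ne_zero, Fin.pred_succ]
    · refine ⟨i.succ, i.succ + 1, Or.inl rfl, ?_⟩
      rw [negPrefixSum_rho_add_one _ i.succ_ne_zero, Fin.pred_succ, Pi.single_neg]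
    · exact ⟨0, 1, Or.inl (zero_add 1).symm, negPrefixSum_rho_zero_one (by omega)⟩

theorem negPrefixSumCol_mem_intLat {n : ℕ} (c : Fin (n + 1)) :
    negPrefixSumCol n c ∈ intLat (Fin n) := by
  intro j
  simp only [negPrefixSumCol]
  split_ifs
  exacts [⟨-1, by simp⟩, ⟨0, by simp⟩]

def negPrefixSumSection (n : ℕ) : (Fin n → ℝ) →ₗ[ℝ] (Fin (n + 1) → ℝ) :=
  Fintype.linearCombination ℝ fun j => rho (j.succ + 1, j.succ)

theorem negPrefixSum_negPrefixSumSection (n : ℕ) :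
    Function.RightInverse (negPrefixSumSection n) (negPrefixSum n) := by
  intro y
  simp only [negPrefixSumSection, Fintype.linearCombination_apply, map_sum, map_smul,
    negPrefixSum_rho_add_one_swap _ (Fin.succ_ne_zero _), Fin.pred_succ]
  funext j
  simp [Finset.sum_apply, Pi.single_apply]

theorem negPrefixSumSection_mem_sumZero {n : ℕ} (y : Fin n → ℝ) :
    negPrefixSumSection n y ∈ sumZero (Fin (n + 1)) := by
  rw [negPrefixSumSection, Fintype.linearCombination_apply]
  exact Submodule.sum_mem _ fun j _ => Submodule.smul_mem _ _ (rho_mem_sumZero _)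

theorem bijOn_negPrefixSum (n : ℕ) :
    Set.BijOn (negPrefixSum n) (latticeSet (Fin (n + 1))) (intLat (Fin n)) := by
  have hinv : Set.LeftInvOn (negPrefixSumSection n) (negPrefixSum n) (sumZero (Fin (n + 1))) :=
    LinearMap.leftInvOn_of_rightInverse_of_finrank_eq negPrefixSumSection_mem_sumZero
      (negPrefixSum_negPrefixSumSection n) (by simpa using finrank_sumZero_add_one (Fin (n + 1)))
  exact Set.InvOn.bijOn ⟨fun x hx => hinv (mem_sumZero.2 hx.2),
    fun y _ => negPrefixSum_negPrefixSumSection n y⟩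
    (fun x hx => sum_smul_mem_intLat hx.1 negPrefixSumCol_mem_intLat)
    (fun y hy => ⟨sum_smul_mem_intLat hy fun _ => rho_mem_intLat _,
      mem_sumZero.1 (negPrefixSumSection_mem_sumZero y)⟩)

/-- removing the single arrow `(2,1)` (here `(1,0)` in `Fin (2k+1)`) from
the symmetric odd cycle on `2k+1` vertices yields a directed graph `G'` in which every
arrow still lies in a directed cycle, and `P_{G'}` is unimodularly equivalent to the
pseudo del Pezzo polytope `conv{±e_1, …, ±e_{2k}, e_1 + ⋯ + e_{2k}}`. -/
theorem stmt16 (k : ℕ) (hk : 1 ≤ k) :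
    EveryArrowInDirCycle
      ((symCyc (2 * k + 1)).erase ((1 : Fin (2 * k + 1)), (0 : Fin (2 * k + 1)))) ∧
    ∃ T : (Fin (2 * k + 1) → ℝ) →ₗ[ℝ] (Fin (2 * k) → ℝ),
      Set.BijOn T (latticeSet (Fin (2 * k + 1))) (intLat (Fin (2 * k))) ∧
      T '' polyG ((symCyc (2 * k + 1)).erase
          ((1 : Fin (2 * k + 1)), (0 : Fin (2 * k + 1)))) =
        convexHull ℝ (pseudoDelPezzoVerts (2 * k)) := by
  refine ⟨everyArrowInDirCycle_erase_symCyc (by omega), negPrefixSum (2 * k),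
    bijOn_negPrefixSum (2 * k), ?_⟩
  rw [polyG, LinearMap.image_convexHull, image_negPrefixSum_rho_erase_symCyc (by omega)]
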